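/- The function h(H) = log(Γ(3/2 - H)) - (1/2)·log(Γ(2 - 2H)) on (0,1) attains a strict global maximum at H = 1/2. -/

import Mathlib

open Real Set

/-- `log Γ (x + 1)` is convex and `log Γ x = log Γ (x + 1) - log x`, so strict concavity of `log`
makes `log ∘ Γ` strictly convex. -/
theorem Real.strictConvexOn_log_Gamma : StrictConvexOn ℝ (Ioi 0) (log ∘ Gamma) := by
  have hshift : ConvexOn ℝ (Ioi 0) (fun x => log (Gamma (1 + x))) :=
    (convexOn_log_Gamma.translate_right 1).subset
      (fun x (hx : 0 < x) => show (0:ℝ) < 1 + x by linarith) (convex_Ioi 0)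
  refine (hshift.add_strictConvexOn strictConcaveOn_log_Ioi.neg).congr fun x (hx : 0 < x) => ?_
  rw [Pi.add_apply, Pi.neg_apply, Function.comp_apply, add_comm 1 x, Gamma_add_one hx.ne',
    log_mul hx.ne' (Gamma_pos_of_pos hx).ne']
  ring

theorem arfima_entropy_rate_strict_max (H : ℝ) (hH : H ∈ Set.Ioo (0:ℝ) 1)
    (hne : H ≠ 1/2) :
    Real.log (Real.Gamma (3/2 - H)) - (1/2) * Real.log (Real.Gamma (2 - 2 * H))
      < Real.log (Real.Gamma (3/2 - (1/2 : ℝ)))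
        - (1/2) * Real.log (Real.Gamma (2 - 2 * (1/2 : ℝ))) := by
  have hpos : (0:ℝ) < 2 - 2 * H := by linarith [hH.2]
  have hdist : (1:ℝ) ≠ 2 - 2 * H := fun h => hne (by linarith)
  -- `3/2 - H` is the midpoint of `1` and `2 - 2H`, and `log Γ 1 = 0`.
  have hmid := strictConvexOn_log_Gamma.2 (mem_Ioi.2 one_pos) (mem_Ioi.2 hpos) hdist
    (by norm_num : (0:ℝ) < 1/2) (by norm_num : (0:ℝ) < 1/2) (by norm_num)
  simp only [Function.comp_apply, smul_eq_mul, Gamma_one, log_one] at hmid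
  rw [show 1/2 * 1 + 1/2 * (2 - 2 * H) = 3/2 - H by ring] at hmid
  norm_num [Gamma_one]
  linarith
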